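/- arXiv:2507.17631 — 4 statements merged into one kernel-verified Lean document; each statement's English description precedes it below -/
import Mathlib

section
/- Let N be a finite 𝔖-module annihilated both by f = u^r + p·x (with x ∈ 𝔖 a unit, r ≥ 1) and by an Eisenstein polynomial E of degree e. If e ≠ r, then N is killed by p. -/
/-!
Write `E = u^e + p·G` and `f = u^r + p·x`. If `e < r`, then
`u^(r-e)·E - f = p·(u^(r-e)·G - x)`, and `u^(r-e)·G - x` is a unit of `𝔖` since its constant
term is `-x(0)`. If `r < e`, then `E - u^(e-r)·f = p·(G - u^(e-r)·x)`, and the Eisenstein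
condition makes `G(0)` a unit. Either way `p` lies in the ideal `(E, f)`, which kills `N`.
-/

open Polynomial

namespace Polynomial

variable {R : Type*} [CommRing R] {E : R[X]} {a : R}

theorem Monic.exists_eq_X_pow_add_C_mul (hE : E.Monic)
    (hco : ∀ i < E.natDegree, a ∣ E.coeff i) : ∃ G, E = X ^ E.natDegree + C a * G := by
  obtain ⟨G, hG⟩ : C a ∣ E - X ^ E.natDegree := by
    rw [C_dvd_iff_dvd_coeff]
    intro i
    rcases lt_trichotomy i E.natDegree with h | rfl | h
    · simpa [coeff_X_pow, h.ne] using hco i h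
    · simp [hE.coeff_natDegree]
    · simp [coeff_X_pow, h.ne', coeff_eq_zero_of_natDegree_lt h]
  exact ⟨G, by rw [← hG, add_sub_cancel]⟩

/-- `G` is only determined up to `a`-torsion: shifting its constant term by `b - G(0)`, which
`a` kills, pins that term down without cancelling `a`. -/
theorem Monic.exists_eq_X_pow_add_C_mul_of_coeff_zero (hE : E.Monic)
    (hco : ∀ i < E.natDegree, a ∣ E.coeff i) (hdeg : 0 < E.natDegree) {b : R}
    (h0 : E.coeff 0 = a * b) : ∃ G, E = X ^ E.natDegree + C a * G ∧ G.coeff 0 = b := by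
  obtain ⟨G, hG⟩ := hE.exists_eq_X_pow_add_C_mul hco
  have hG0 : a * G.coeff 0 = a * b := by
    rw [← h0, hG, coeff_add, coeff_X_pow, if_neg hdeg.ne, zero_add, coeff_C_mul]
  refine ⟨G + C (b - G.coeff 0), ?_, by simp⟩
  rw [mul_add, ← C_mul, mul_sub, hG0, sub_self, C_0, add_zero]
  exact hG

end Polynomial

theorem mem_span_pow_add_mul_pow_add_mul_of_isUnit {A : Type*} [CommRing A] {t a g x : A}
    {e r : ℕ} (h : e ≤ r) (hu : IsUnit (t ^ (r - e) * g - x)) :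
    a ∈ Ideal.span {t ^ e + a * g, t ^ r + a * x} := by
  obtain ⟨c, hc⟩ := hu
  rw [Ideal.mem_span_pair]
  refine ⟨c⁻¹ * t ^ (r - e), -c⁻¹, ?_⟩
  have hpow : t ^ (r - e) * t ^ e = t ^ r := by rw [← pow_add, Nat.sub_add_cancel h]
  calc _ = c⁻¹ * (a * (t ^ (r - e) * g - x)) := by linear_combination (↑c⁻¹ : A) * hpow
    _ = a := by rw [← hc, mul_left_comm, Units.inv_mul, mul_one]

theorem PowerSeries.isUnit_X_pow_mul_sub {R : Type*} [CommRing R] {n : ℕ} (hn : n ≠ 0)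
    (z : PowerSeries R) {y : PowerSeries R} (hy : IsUnit y) : IsUnit (X ^ n * z - y) := by
  rw [isUnit_iff_constantCoeff] at hy ⊢
  simpa [zero_pow hn] using hy.neg

theorem stmt_6_general {p : ℕ} [Fact p.Prime] {k : Type*} [Field k]
    (E : Polynomial (WittVector p k)) (e : ℕ) (hE : E.Monic) (hdeg : E.natDegree = e)
    (hco : ∀ i < e, (p : WittVector p k) ∣ E.coeff i)
    (hconst : ∃ v : (WittVector p k)ˣ, E.coeff 0 = (p : WittVector p k) * v)
    (N : Type*) [AddCommGroup N] [Module (PowerSeries (WittVector p k)) N]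
    (r : ℕ) (x : (PowerSeries (WittVector p k))ˣ)
    (hf : ∀ n : N, (PowerSeries.X ^ r +
      (p : PowerSeries (WittVector p k)) * (x : PowerSeries (WittVector p k))) • n = 0)
    (hEkill : ∀ n : N, (E : PowerSeries (WittVector p k)) • n = 0)
    (her : e ≠ r) :
    ∀ n : N, (p : PowerSeries (WittVector p k)) • n = 0 := by
  subst hdeg
  set A := PowerSeries (WittVector p k)
  have hspan : Ideal.span {(E : A), PowerSeries.X ^ r + (p : A) * (x : A)} ≤
      Module.annihilator A N := by
    rw [Ideal.span_le]
    rintro _ (rfl | rfl)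
    exacts [Module.mem_annihilator.2 hEkill, Module.mem_annihilator.2 hf]
  refine Module.mem_annihilator.1 (hspan ?_)
  have hcoe (G : Polynomial (WittVector p k)) :
      ((X ^ E.natDegree + C (p : WittVector p k) * G : Polynomial _) : A) =
        PowerSeries.X ^ E.natDegree + (p : A) * (G : A) := by
    rw [Polynomial.coe_add, Polynomial.coe_mul, Polynomial.coe_pow, Polynomial.coe_X,
      Polynomial.coe_C, map_natCast]
  rcases her.lt_or_gt with hlt | hlt
  · obtain ⟨G, hG⟩ := hE.exists_eq_X_pow_add_C_mul hco
    rw [hG, hcoe]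
    exact mem_span_pow_add_mul_pow_add_mul_of_isUnit hlt.le
      (PowerSeries.isUnit_X_pow_mul_sub (by omega) _ x.isUnit)
  · obtain ⟨v, hv⟩ := hconst
    obtain ⟨G, hG, hG0⟩ := hE.exists_eq_X_pow_add_C_mul_of_coeff_zero hco (by omega) hv
    have hGunit : IsUnit (G : A) := by
      rw [PowerSeries.isUnit_iff_constantCoeff, ← PowerSeries.coeff_zero_eq_constantCoeff_apply,
        Polynomial.coeff_coe, hG0]
      exact v.isUnit
    rw [hG, hcoe, Ideal.span_pair_comm]
    exact mem_span_pow_add_mul_pow_add_mul_of_isUnit hlt.le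
      (PowerSeries.isUnit_X_pow_mul_sub (by omega) _ hGunit)

/-- Let `k` be a perfect field of characteristic `p`, `W = W(k)`,
`𝔖 = W[[u]]`, and `E ∈ W[u]` an Eisenstein polynomial of degree `e`. Let `N` be a finite
`𝔖`-module annihilated both by `f = u^r + p·x` (with `x ∈ 𝔖ˣ` a unit, `r ≥ 1`) and by `E`.
If `e ≠ r`, then `N` is killed by `p`. -/
theorem stmt_6 {p : ℕ} [Fact p.Prime] {k : Type*} [Field k] [CharP k p] [PerfectField k]
    (E : Polynomial (WittVector p k)) (e : ℕ) (hE : E.Monic) (hdeg : E.natDegree = e)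
    (hco : ∀ i < e, (p : WittVector p k) ∣ E.coeff i)
    (hconst : ∃ v : (WittVector p k)ˣ, E.coeff 0 = (p : WittVector p k) * v)
    (N : Type*) [AddCommGroup N] [Module (PowerSeries (WittVector p k)) N]
    [Module.Finite (PowerSeries (WittVector p k)) N]
    (r : ℕ) (hr : 1 ≤ r) (x : (PowerSeries (WittVector p k))ˣ)
    (hf : ∀ n : N, (PowerSeries.X ^ r +
      (p : PowerSeries (WittVector p k)) * (x : PowerSeries (WittVector p k))) • n = 0)
    (hEkill : ∀ n : N, (E : PowerSeries (WittVector p k)) • n = 0)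
    (her : e ≠ r) :
    ∀ n : N, (p : PowerSeries (WittVector p k)) • n = 0 :=
  stmt_6_general E e hE hdeg hco hconst N r x hf hEkill her
end

section
/- Let I ⊆ 𝔖 be an ideal and α ≥ 1 the minimal integer such that I + (p) = (p, u^α); assume also I + (u) = (p, u). Then either p ∈ I, or I contains an element of the form u^α + p·x with x a unit of 𝔖. -/
/-!
Write `u ^ α = f + g p` with `f ∈ I`; if `-g` is a unit we are done, so let `g` lie in the
maximal ideal. Write `p = a + t u` with `a ∈ I` and `a = r p + s u ^ α`; then `p (1 - r) ∈ (u)`,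
and since `p ∉ (u)` the element `r` is a unit. The combination `f r + g a = u ^ α (r + g s)`
has a unit cofactor, so `u ^ α ∈ I`, hence `r p = a - s u ^ α ∈ I` and `p ∈ I`.
-/

open PowerSeries

namespace IsLocalRing

variable {S : Type*} [CommRing S] [IsLocalRing S]

theorem isUnit_of_mul_one_sub_mem_span {p u r : S} (hp : p ∉ Ideal.span {u})
    (h : p * (1 - r) ∈ Ideal.span {u}) : IsUnit r := by
  by_contra hr
  obtain ⟨w, hw⟩ := isUnit_one_sub_self_of_mem_nonunits r hr
  refine hp ?_
  simpa [← hw, mul_assoc] using Ideal.mul_mem_right (↑w⁻¹ : S) _ h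

theorem isUnit_add_mul_of_not_isUnit {r g : S} (hr : IsUnit r) (hg : ¬IsUnit g) (s : S) :
    IsUnit (r + g * s) := by
  by_contra h
  have hgs : -(g * s) ∈ nonunits S := fun h' =>
    hg (isUnit_of_mul_isUnit_left ((IsUnit.neg_iff _).mp h'))
  exact nonunits_add h hgs (by simpa using hr)

theorem mem_or_exists_pow_add_mul_unit_mem {I : Ideal S} {p u : S} {α : ℕ} (hα : 1 ≤ α)
    (hp : p ∉ Ideal.span {u}) (hIp : I ⊔ Ideal.span {p} = Ideal.span {p, u ^ α})
    (hIu : p ∈ I ⊔ Ideal.span {u}) :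
    p ∈ I ∨ ∃ x : Sˣ, u ^ α + p * x ∈ I := by
  have hpow : u ^ α ∈ I ⊔ Ideal.span {p} := hIp ▸ Ideal.subset_span (by simp)
  obtain ⟨f, hf, _, hgp, hfg⟩ := Submodule.mem_sup.mp hpow
  obtain ⟨g, rfl⟩ := Ideal.mem_span_singleton'.mp hgp
  by_cases hg : IsUnit g
  · exact Or.inr ⟨-hg.unit, by convert hf using 1; simp [← hfg]; ring⟩
  left
  obtain ⟨a, ha, _, htu, hat⟩ := Submodule.mem_sup.mp hIu
  obtain ⟨t, rfl⟩ := Ideal.mem_span_singleton'.mp htu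
  obtain ⟨r, s, hrs⟩ := Ideal.mem_span_pair.mp (hIp ▸ Submodule.mem_sup_left ha : a ∈ _)
  have hr : IsUnit r := by
    refine isUnit_of_mul_one_sub_mem_span hp (Ideal.mem_span_singleton'.mpr
      ⟨t + s * u ^ (α - 1), ?_⟩)
    rw [add_mul, mul_assoc, ← pow_succ, Nat.sub_add_cancel hα]
    linear_combination hrs + hat
  have huα : u ^ α ∈ I := by
    obtain ⟨w, hw⟩ := isUnit_add_mul_of_not_isUnit hr hg s
    have key : f * r + g * a = u ^ α * w := by rw [hw, ← hrs, ← hfg]; ring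
    have hmem : u ^ α * w ∈ I := key ▸ I.add_mem (I.mul_mem_right r hf) (I.mul_mem_left g ha)
    simpa [mul_assoc] using I.mul_mem_right (↑w⁻¹ : S) hmem
  obtain ⟨v, rfl⟩ := hr
  have hvp : ↑v * p ∈ I := by
    rw [show ↑v * p = a - s * u ^ α by rw [← hrs]; ring]
    exact I.sub_mem ha (I.mul_mem_left s huα)
  simpa [← mul_assoc] using I.mul_mem_left (↑v⁻¹ : S) hvp

end IsLocalRing

theorem PowerSeries.natCast_notMem_span_X {R : Type*} [CommRing R] {n : ℕ} (hn : (n : R) ≠ 0) :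
    (n : R⟦X⟧) ∉ Ideal.span {X} := by
  rw [Ideal.mem_span_singleton, X_dvd_iff, map_natCast]
  exact hn

theorem stmt_7_general {p : ℕ} [Fact p.Prime] {k : Type*} [Field k] [CharP k p] [PerfectField k]
    (I : Ideal (PowerSeries (WittVector p k))) (α : ℕ) (hα : 1 ≤ α)
    (hIp : I ⊔ Ideal.span {(p : PowerSeries (WittVector p k))} =
      Ideal.span {(p : PowerSeries (WittVector p k)), PowerSeries.X ^ α})
    (hIu : I ⊔ Ideal.span {(PowerSeries.X : PowerSeries (WittVector p k))} =
      Ideal.span {(p : PowerSeries (WittVector p k)), PowerSeries.X}) :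
    (p : PowerSeries (WittVector p k)) ∈ I ∨
      ∃ x : (PowerSeries (WittVector p k))ˣ,
        PowerSeries.X ^ α +
          (p : PowerSeries (WittVector p k)) * (x : PowerSeries (WittVector p k)) ∈ I :=
  IsLocalRing.mem_or_exists_pow_add_mul_unit_mem hα
    (natCast_notMem_span_X (WittVector.irreducible p).ne_zero) hIp
    (hIu ▸ Ideal.subset_span (by simp))

/-- Let `k` be a perfect field of characteristic `p`, `W = W(k)`,
`𝔖 = W[[u]]`. Let `I ⊆ 𝔖` be an ideal and `α ≥ 1` the minimal integer such that
`I + (p) = (p, u^α)`; assume also `I + (u) = (p, u)`. Then either `p ∈ I`, or `I`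
contains an element of the form `u^α + p·x` with `x` a unit of `𝔖`. -/
theorem stmt_7 {p : ℕ} [Fact p.Prime] {k : Type*} [Field k] [CharP k p] [PerfectField k]
    (I : Ideal (PowerSeries (WittVector p k))) (α : ℕ) (hα : 1 ≤ α)
    (hIp : I ⊔ Ideal.span {(p : PowerSeries (WittVector p k))} =
      Ideal.span {(p : PowerSeries (WittVector p k)), PowerSeries.X ^ α})
    (hmin : ∀ β : ℕ, I ⊔ Ideal.span {(p : PowerSeries (WittVector p k))} =
      Ideal.span {(p : PowerSeries (WittVector p k)), PowerSeries.X ^ β} → α ≤ β)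
    (hIu : I ⊔ Ideal.span {(PowerSeries.X : PowerSeries (WittVector p k))} =
      Ideal.span {(p : PowerSeries (WittVector p k)), PowerSeries.X}) :
    (p : PowerSeries (WittVector p k)) ∈ I ∨
      ∃ x : (PowerSeries (WittVector p k))ˣ,
        PowerSeries.X ^ α +
          (p : PowerSeries (WittVector p k)) * (x : PowerSeries (WittVector p k)) ∈ I :=
  stmt_7_general I α hα hIp hIu
end

section
/- For every n ≥ 0, the natural map (M_tor)^{(n)}[E] → M^{(n)}[E] is an isomorphism, and M^{(n)}[E] is killed by a power of p. Here N^{(n)} denotes 𝔖 ⊗_{𝔖,φ^n} N and N[E] the E-torsion submodule. -/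
noncomputable section

variable {R : Type*} [CommRing R]

/-- A copy of `R` regarded as a module over `R` through the ring endomorphism `ψ`. -/
def TwBase (ψ : R →+* R) : Type _ := R

instance (ψ : R →+* R) : CommRing (TwBase ψ) := inferInstanceAs (CommRing R)
instance (ψ : R →+* R) : Module R (TwBase ψ) := Module.compHom R ψ

/-- The base change (Frobenius twist) `ψ^*M = R ⊗_{R,ψ} M` of a module `M` along `ψ`. -/
def Twist (ψ : R →+* R) (M : Type*) [AddCommGroup M] [Module R M] : Type _ :=
  TensorProduct R (TwBase ψ) M

instance (ψ : R →+* R) (M : Type*) [AddCommGroup M] [Module R M] :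
    AddCommGroup (Twist ψ M) :=
  inferInstanceAs (AddCommGroup (TensorProduct R (TwBase ψ) M))

instance (ψ : R →+* R) (M : Type*) [AddCommGroup M] [Module R M] : Module R (Twist ψ M) :=
  inferInstanceAs (Module R (TensorProduct R (TwBase ψ) M))

/-- Multiplication by `a` on the left factor of the twist, as an `R`-linear map on `TwBase ψ`. -/
def twMulBase (ψ : R →+* R) (a : R) : TwBase ψ →ₗ[R] TwBase ψ where
  toFun x := Mul.mul a x
  map_add' x y := mul_add a x y
  map_smul' r x := mul_left_comm a (ψ r) x

/-- "Target" multiplication by `a ∈ R` on the twist `ψ^*M`; this realises the natural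
module structure of the base change over the target copy of `R`. -/
def twistSMul (ψ : R →+* R) (a : R) (M : Type*) [AddCommGroup M] [Module R M] :
    Twist ψ M →ₗ[R] Twist ψ M :=
  TensorProduct.map (twMulBase ψ a) LinearMap.id

/-- Functoriality of the twist: the map `ψ^*f : ψ^*M → ψ^*N` induced by `f : M → N`. -/
def twistMap (ψ : R →+* R) {M N : Type*} [AddCommGroup M] [Module R M]
    [AddCommGroup N] [Module R N] (f : M →ₗ[R] N) : Twist ψ M →ₗ[R] Twist ψ N :=
  LinearMap.lTensor (TwBase ψ) f

/-- The `n`-th iterate of a ring endomorphism, as a ring homomorphism. -/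
def iterateHom (σ : R →+* R) : ℕ → R →+* R
  | 0 => RingHom.id R
  | n + 1 => σ.comp (iterateHom σ n)

/-- The submodule of elements killed by a power of `r`. -/
def pPrim (r : R) (M : Type*) [AddCommGroup M] [Module R M] : Submodule R M where
  carrier := {x | ∃ n : ℕ, r ^ n • x = 0}
  zero_mem' := ⟨0, smul_zero _⟩
  add_mem' := by
    rintro a b ⟨na, ha⟩ ⟨nb, hb⟩
    refine ⟨na + nb, ?_⟩
    have h1 : r ^ (na + nb) • a = 0 := by
      rw [pow_add, mul_comm, mul_smul, ha, smul_zero]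
    have h2 : r ^ (na + nb) • b = 0 := by
      rw [pow_add, mul_smul, hb, smul_zero]
    rw [smul_add, h1, h2, add_zero]
  smul_mem' := by
    rintro c x ⟨n, hn⟩
    exact ⟨n, by rw [smul_comm, hn, smul_zero]⟩

end

/-! Along `ψ = σ^n` the ring `𝔖` is free of rank `p^n` over itself, with basis
`1, u, …, u^(p^n - 1)`, so the twist is base change along a finite flat ring map. Flatness makes
`ψ^*M_tor → ψ^*M` injective, and right exactness identifies its cokernel with `ψ^*(M/M_tor)`.
There multiplication by `E` is injective: being integral over `ψ(𝔖)`, `E` divides some `ψ(r)`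
with `r ≠ 0`, and `ψ(r)` acts as `r`, which is injective since a flat base change of the
torsion-free module `M/M_tor` is torsion-free. So every `E`-torsion element of `ψ^*M` comes from
`ψ^*M_tor`, which is killed by the same power of `p` as `M_tor`. -/

open TensorProduct

namespace TensorProduct

variable {R S M : Type*} [CommRing R] [AddCommGroup S] [Module R S] [AddCommGroup M] [Module R M]

theorem smul_eq_zero_of_forall_right {r : R} (hr : ∀ m : M, r • m = 0) (z : S ⊗[R] M) :
    r • z = 0 := by
  induction z using TensorProduct.induction_on with
  | zero => exact smul_zero r
  | tmul s m => rw [← tmul_smul, hr, tmul_zero]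
  | add y z hy hz => rw [smul_add, hy, hz, add_zero]

instance isTorsionFree_of_flat [Module.Flat R S] [Module.IsTorsionFree R M] :
    Module.IsTorsionFree R (S ⊗[R] M) where
  isSMulRegular r hr := by
    have h := Module.Flat.lTensor_preserves_injective_linearMap (M := S)
      (LinearMap.lsmul R M r) (hr.isSMulRegular (M := M))
    have hsmul : LinearMap.lTensor S (LinearMap.lsmul R M r) = r • LinearMap.id := by
      ext; simp
    rwa [hsmul] at h

end TensorProduct

theorem RingHom.IsIntegral.exists_ne_zero_dvd {R S : Type*} [CommRing R] [Nontrivial R]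
    [CommRing S] [IsDomain S] {f : R →+* S} (hf : f.IsIntegral) {a : S} (ha : a ≠ 0) :
    ∃ r ≠ 0, a ∣ f r := by
  obtain ⟨P, hP, hPa⟩ := hf a
  obtain ⟨r, hr, hr0⟩ := Submodule.exists_mem_ne_zero_of_ne_bot <|
    Ideal.comap_ne_bot_of_root_mem ha (Ideal.mem_span_singleton_self a) hP.ne_zero hPa
  exact ⟨r, hr0, Ideal.mem_span_singleton.mp hr⟩

section Twist

variable {R : Type*} [CommRing R] (ψ : R →+* R)

theorem twistSMul_comp_twistMap (a : R) {M N : Type*} [AddCommGroup M] [Module R M]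
    [AddCommGroup N] [Module R N] (f : M →ₗ[R] N) :
    twistSMul ψ a N ∘ₗ twistMap ψ f = twistMap ψ f ∘ₗ twistSMul ψ a M := by
  change map _ _ ∘ₗ map _ _ = map _ _ ∘ₗ map _ _
  simp only [← map_comp, LinearMap.id_comp, LinearMap.comp_id]

theorem twistSMul_mul (a b : R) (M : Type*) [AddCommGroup M] [Module R M] :
    twistSMul ψ (a * b) M = twistSMul ψ a M ∘ₗ twistSMul ψ b M := by
  change map _ _ = map _ _ ∘ₗ map _ _
  rw [← map_comp, LinearMap.id_comp]
  congr 1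
  ext x
  exact mul_assoc a b x

theorem twistSMul_map_eq_smul (r : R) (M : Type*) [AddCommGroup M] [Module R M] :
    twistSMul ψ (ψ r) M = r • LinearMap.id := by
  have h : twMulBase ψ (ψ r) = r • LinearMap.id := rfl
  change map _ _ = _
  rw [h, map_smul_left, map_id]
  rfl

instance (M : Type*) [AddCommGroup M] [Module R M] [Module.Flat R (TwBase ψ)]
    [Module.IsTorsionFree R M] : Module.IsTorsionFree R (Twist ψ M) :=
  inferInstanceAs (Module.IsTorsionFree R (TwBase ψ ⊗[R] M))

theorem twistSMul_injective [IsDomain R] [Module.Finite R (TwBase ψ)] [Module.Flat R (TwBase ψ)]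
    {a : R} (ha : a ≠ 0) (M : Type*) [AddCommGroup M] [Module R M] [Module.IsTorsionFree R M] :
    Function.Injective (twistSMul ψ a M) := by
  have hψ : ψ.Finite := ‹Module.Finite R (TwBase ψ)›
  obtain ⟨r, hr, b, hb⟩ := hψ.to_isIntegral.exists_ne_zero_dvd ha
  refine .of_comp (f := twistSMul ψ b M) ?_
  rw [← LinearMap.coe_comp, ← twistSMul_mul, mul_comm, ← hb, twistSMul_map_eq_smul]
  exact smul_right_injective _ hr

variable {ψ} {M : Type*} [AddCommGroup M] [Module R M] (a : R)

theorem twistMap_mem_ker_twistSMul {N : Type*} [AddCommGroup N] [Module R N] (f : M →ₗ[R] N) :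
    ∀ x ∈ LinearMap.ker (twistSMul ψ a M),
      twistMap ψ f x ∈ LinearMap.ker (twistSMul ψ a N) := by
  intro x hx
  rw [LinearMap.mem_ker] at hx ⊢
  rw [← LinearMap.comp_apply, twistSMul_comp_twistMap, LinearMap.comp_apply, hx, map_zero]

variable {a} {N : Submodule R M}

theorem ker_twistSMul_le_range (hQ : Function.Injective (twistSMul ψ a (M ⧸ N))) :
    LinearMap.ker (twistSMul ψ a M) ≤ LinearMap.range (twistMap ψ N.subtype) := by
  intro y hy
  have hq : twistSMul ψ a (M ⧸ N) (twistMap ψ N.mkQ y) = 0 := by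
    rw [← LinearMap.comp_apply, twistSMul_comp_twistMap, LinearMap.comp_apply,
      LinearMap.mem_ker.mp hy, map_zero]
  exact (lTensor_exact (TwBase ψ) (LinearMap.exact_subtype_mkQ N) N.mkQ_surjective y).mp
    (hQ (hq.trans (map_zero _).symm))

theorem bijective_restrict_twistMap [Module.Flat R (TwBase ψ)]
    (hQ : Function.Injective (twistSMul ψ a (M ⧸ N))) :
    Function.Bijective
      ((twistMap ψ N.subtype).restrict (twistMap_mem_ker_twistSMul a N.subtype)) := by
  have hinj : Function.Injective (twistMap ψ N.subtype) :=
    Module.Flat.lTensor_preserves_injective_linearMap _ N.injective_subtype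
  refine ⟨fun x y hxy => Subtype.ext (hinj (congrArg Subtype.val hxy)), ?_⟩
  rintro ⟨y, hy⟩
  obtain ⟨x, rfl⟩ := ker_twistSMul_le_range hQ hy
  refine ⟨⟨x, ?_⟩, rfl⟩
  apply hinj
  rw [map_zero, ← LinearMap.comp_apply, ← twistSMul_comp_twistMap]
  exact hy

theorem smul_eq_zero_of_mem_ker_twistSMul (hQ : Function.Injective (twistSMul ψ a (M ⧸ N)))
    {r : R} (hr : ∀ x ∈ N, r • x = 0) :
    ∀ y ∈ LinearMap.ker (twistSMul ψ a M), r • y = 0 := by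
  intro y hy
  obtain ⟨x, rfl⟩ := ker_twistSMul_le_range hQ hy
  have hx : r • x = 0 :=
    TensorProduct.smul_eq_zero_of_forall_right (fun m => Subtype.ext (hr m m.2)) x
  rw [← map_smul, hx, map_zero]

end Twist

theorem iterateHom_bijective {R : Type*} [CommRing R] {σ : R →+* R}
    (hσ : Function.Bijective σ) (n : ℕ) : Function.Bijective (iterateHom σ n) := by
  induction n with
  | zero => exact Function.bijective_id
  | succ n ih => exact hσ.comp ih

namespace PowerSeries

variable {A : Type*} [CommRing A] {F : A →+* A}

theorem coeff_iterateHom {q : ℕ} {σ : A⟦X⟧ →+* A⟦X⟧}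
    (hσ : ∀ f m, coeff m (σ f) = if q ∣ m then F (coeff (m / q) f) else 0)
    (n : ℕ) (f : A⟦X⟧) (m : ℕ) :
    coeff m (iterateHom σ n f) =
      if q ^ n ∣ m then iterateHom F n (coeff (m / q ^ n) f) else 0 := by
  induction n generalizing m with
  | zero => simp [iterateHom]
  | succ n ih =>
    change coeff m (σ (iterateHom σ n f)) = _
    rw [hσ]
    by_cases hqm : q ∣ m
    · have hiff : q ^ n ∣ m / q ↔ q ^ (n + 1) ∣ m := by
        rw [Nat.dvd_div_iff_mul_dvd hqm, pow_succ']
      rw [if_pos hqm, ih, Nat.div_div_eq_div_mul, ← pow_succ']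
      split_ifs with h₁ h₂ h₂
      · rfl
      · exact absurd (hiff.mp h₁) h₂
      · exact absurd (hiff.mpr h₂) h₁
      · exact map_zero F
    · rw [if_neg hqm, if_neg fun h => hqm ((dvd_pow_self q n.succ_ne_zero).trans h)]

variable (ψ : A⟦X⟧ →+* A⟦X⟧) (q : ℕ)

noncomputable def sumMulXPow (g : Fin q → A⟦X⟧) : A⟦X⟧ := ∑ i, ψ (g i) * X ^ (i : ℕ)

theorem sumMulXPow_add (g h : Fin q → A⟦X⟧) :
    sumMulXPow ψ q (g + h) = sumMulXPow ψ q g + sumMulXPow ψ q h := by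
  simp only [sumMulXPow, Pi.add_apply, map_add, add_mul, Finset.sum_add_distrib]

theorem sumMulXPow_smul (r : A⟦X⟧) (g : Fin q → A⟦X⟧) :
    sumMulXPow ψ q (r • g) = ψ r * sumMulXPow ψ q g := by
  simp only [sumMulXPow, Pi.smul_apply, smul_eq_mul, map_mul, Finset.mul_sum, mul_assoc]

variable {ψ q}

theorem coeff_sumMulXPow
    (hψ : ∀ f m, coeff m (ψ f) = if q ∣ m then F (coeff (m / q) f) else 0)
    (g : Fin q → A⟦X⟧) (i : Fin q) (j : ℕ) :
    coeff (q * j + i) (sumMulXPow ψ q g) = F (coeff j (g i)) := by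
  rw [sumMulXPow, map_sum, Finset.sum_eq_single i]
  · rw [coeff_mul_X_pow, hψ, if_pos (dvd_mul_right q j), Nat.mul_div_cancel_left _ i.pos]
  · intro i' _ hi'
    rw [coeff_mul_X_pow', hψ]
    split_ifs with hle hdvd
    · obtain ⟨c, hc⟩ := hdvd
      refine absurd (Fin.ext ?_) hi'
      have : q * j + (i : ℕ) = q * c + i' := by omega
      simpa [Nat.mul_add_mod, Nat.mod_eq_of_lt i.isLt, Nat.mod_eq_of_lt i'.isLt] using
        congrArg (· % q) this.symm
    · rfl
    · rfl
  · simp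

theorem sumMulXPow_injective
    (hψ : ∀ f m, coeff m (ψ f) = if q ∣ m then F (coeff (m / q) f) else 0)
    (hF : Function.Injective F) : Function.Injective (sumMulXPow ψ q) := by
  intro g h hgh
  funext i
  ext j
  apply hF
  rw [← coeff_sumMulXPow hψ, ← coeff_sumMulXPow hψ, hgh]

theorem sumMulXPow_surjective
    (hψ : ∀ f m, coeff m (ψ f) = if q ∣ m then F (coeff (m / q) f) else 0) (hq : 0 < q)
    (hF : Function.Surjective F) : Function.Surjective (sumMulXPow ψ q) := by
  intro f
  refine ⟨fun i => mk fun j => Function.surjInv hF (coeff (q * j + i) f), ?_⟩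
  ext m
  have hm : m = q * (m / q) + (⟨m % q, Nat.mod_lt m hq⟩ : Fin q) := (Nat.div_add_mod m q).symm
  rw [hm, coeff_sumMulXPow hψ, coeff_mk, Function.surjInv_eq hF]

/-- `A⟦X⟧` is free over itself through `ψ`, with basis `1, X, …, X ^ (q - 1)`. -/
noncomputable def piEquivTwBase
    (hψ : ∀ f m, coeff m (ψ f) = if q ∣ m then F (coeff (m / q) f) else 0) (hq : 0 < q)
    (hF : Function.Bijective F) : (Fin q → A⟦X⟧) ≃ₗ[A⟦X⟧] TwBase ψ :=
  LinearEquiv.ofBijective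
    ({ toFun := sumMulXPow ψ q
       map_add' := sumMulXPow_add ψ q
       map_smul' := sumMulXPow_smul ψ q } : (Fin q → A⟦X⟧) →ₗ[A⟦X⟧] TwBase ψ)
    ⟨sumMulXPow_injective hψ hF.1, sumMulXPow_surjective hψ hq hF.2⟩

end PowerSeries

theorem stmt_11_general {p : ℕ} [Fact p.Prime] {k : Type*} [Field k] [CharP k p] [PerfectField k]
    (σ : PowerSeries (WittVector p k) →+* PowerSeries (WittVector p k))
    (hσ : ∀ (f : PowerSeries (WittVector p k)) (m : ℕ),
      PowerSeries.coeff m (σ f) =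
        if p ∣ m then WittVector.frobenius (PowerSeries.coeff (m / p) f) else 0)
    (E : Polynomial (WittVector p k)) (hE : E.Monic)
    (M : Type*) [AddCommGroup M] [Module (PowerSeries (WittVector p k)) M]
    (htor : ∃ N : ℕ, ∀ x ∈ Submodule.torsion (PowerSeries (WittVector p k)) M,
      (p : PowerSeries (WittVector p k)) ^ N • x = 0)
    (n : ℕ) :
    let 𝔖 := PowerSeries (WittVector p k)
    let ψ := iterateHom σ n
    let Mtor := Submodule.torsion 𝔖 M
    let ι := twistMap ψ Mtor.subtype
    ∃ h : ∀ x ∈ LinearMap.ker (twistSMul ψ (E : 𝔖) Mtor),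
        ι x ∈ LinearMap.ker (twistSMul ψ (E : 𝔖) M),
      Function.Bijective (ι.restrict h) ∧
        ∀ y ∈ LinearMap.ker (twistSMul ψ (E : 𝔖) M),
          ∃ N : ℕ, (p : 𝔖) ^ N • y = 0 := by
  intro 𝔖 ψ Mtor ι
  obtain ⟨N, hN⟩ := htor
  let e := PowerSeries.piEquivTwBase (PowerSeries.coeff_iterateHom hσ n)
    (pow_pos (Fact.out : p.Prime).pos n)
    (iterateHom_bijective (WittVector.frobenius_bijective p k) n)
  have : Module.Free 𝔖 (TwBase ψ) := .of_equiv e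
  have : Module.Finite 𝔖 (TwBase ψ) := .equiv e
  have hE0 : (E : 𝔖) ≠ 0 := fun h => hE.ne_zero (Polynomial.coe_eq_zero_iff.mp h)
  have hQ := twistSMul_injective ψ hE0 (M ⧸ Mtor)
  exact ⟨twistMap_mem_ker_twistSMul _ _, bijective_restrict_twistMap hQ,
    fun y hy => ⟨N, smul_eq_zero_of_mem_ker_twistSMul hQ hN y hy⟩⟩

/-- Let `k` be a perfect field of characteristic `p`, `W = W(k)`,
`𝔖 = W[[u]]` with its Frobenius lift `σ`, `E ∈ W[u]` an Eisenstein polynomial of degree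
`e`, `M` a finitely generated `𝔖`-module whose torsion submodule `M_tor` is killed by a
power of `p`. For every `n ≥ 0`, the natural map `(M_tor)^{(n)}[E] → M^{(n)}[E]` is an
isomorphism, and `M^{(n)}[E]` is killed by a power of `p`. Here `N^{(n)} = 𝔖 ⊗_{𝔖,σ^n} N`
(the module `Twist (iterateHom σ n) N`, with `E` acting through `twistSMul`) and `N[E]`
is the `E`-torsion submodule. -/
theorem stmt_11 {p : ℕ} [Fact p.Prime] {k : Type*} [Field k] [CharP k p] [PerfectField k]
    (σ : PowerSeries (WittVector p k) →+* PowerSeries (WittVector p k))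
    (hσ : ∀ (f : PowerSeries (WittVector p k)) (m : ℕ),
      PowerSeries.coeff m (σ f) =
        if p ∣ m then WittVector.frobenius (PowerSeries.coeff (m / p) f) else 0)
    (E : Polynomial (WittVector p k)) (e : ℕ) (hE : E.Monic) (hdeg : E.natDegree = e)
    (hco : ∀ i < e, (p : WittVector p k) ∣ E.coeff i)
    (hconst : ∃ v : (WittVector p k)ˣ, E.coeff 0 = (p : WittVector p k) * v)
    (M : Type*) [AddCommGroup M] [Module (PowerSeries (WittVector p k)) M]
    [Module.Finite (PowerSeries (WittVector p k)) M]
    (htor : ∃ N : ℕ, ∀ x ∈ Submodule.torsion (PowerSeries (WittVector p k)) M,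
      (p : PowerSeries (WittVector p k)) ^ N • x = 0)
    (n : ℕ) :
    let 𝔖 := PowerSeries (WittVector p k)
    let ψ := iterateHom σ n
    let Mtor := Submodule.torsion 𝔖 M
    let ι := twistMap ψ Mtor.subtype
    ∃ h : ∀ x ∈ LinearMap.ker (twistSMul ψ (E : 𝔖) Mtor),
        ι x ∈ LinearMap.ker (twistSMul ψ (E : 𝔖) M),
      Function.Bijective (ι.restrict h) ∧
        ∀ y ∈ LinearMap.ker (twistSMul ψ (E : 𝔖) M),
          ∃ N : ℕ, (p : 𝔖) ^ N • y = 0 :=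
  stmt_11_general σ hσ E hE M htor n
end

section
/- Let N' ⊆ N be finitely generated free 𝔖-modules such that the quotient M = N/N' is killed by a power of p. Then for every n ≥ 0, the Frobenius twist M^{(n)} = 𝔖 ⊗_{𝔖,φ^n} M has trivial E-torsion: M^{(n)}[E] = 0. -/
/-!
Write `M` as the cokernel of `j : 𝔖^a → 𝔖^b` with `p^N M = 0`. As `𝔖^b` is projective, `j` has a
partial inverse `h` with `j ∘ h = p^N = h ∘ j`. Base change along any ring endomorphism `ψ` is right
exact and fixes `p`, so `ψ^*M` is the cokernel of `ψ^*j`, which still satisfies these identities,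
now between free `𝔖`-modules. A diagram chase then shows that `E` is regular on such a cokernel as
soon as `E` is regular on `𝔖` and `p` is regular on `𝔖 / E`; the latter holds because
`E ≡ u^e` modulo `p`.
-/

open scoped Polynomial

namespace PowerSeries

variable {R : Type*} [CommRing R]

theorem C_dvd_iff_forall_dvd_coeff {a : R} {f : R⟦X⟧} : C a ∣ f ↔ ∀ n, a ∣ coeff n f := by
  constructor
  · rintro ⟨g, rfl⟩ n
    rw [coeff_C_mul]
    exact dvd_mul_right a _
  · intro h
    choose g hg using h
    exact ⟨mk g, ext fun n => by rw [coeff_C_mul, coeff_mk, hg]⟩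

theorem C_dvd_iff_map_eq_zero {a : R} {f : R⟦X⟧} :
    C a ∣ f ↔ map (Ideal.Quotient.mk (Ideal.span {a})) f = 0 := by
  simp only [C_dvd_iff_forall_dvd_coeff, PowerSeries.ext_iff, coeff_map, map_zero,
    Ideal.Quotient.eq_zero_iff_mem, Ideal.mem_span_singleton]

theorem C_dvd_of_C_dvd_mul_of_isDistinguishedAt {p : R} {E : R[X]}
    (hE : E.IsDistinguishedAt (Ideal.span {p})) {z : R⟦X⟧} (h : C p ∣ (E : R⟦X⟧) * z) :
    C p ∣ z := by
  rw [C_dvd_iff_map_eq_zero] at h ⊢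
  rw [map_mul, ← Polynomial.polynomial_map_coe, hE.map_eq_X_pow, Polynomial.coe_pow,
    Polynomial.coe_X, ← mul_zero (X ^ E.natDegree)] at h
  exact X_pow_mul_injective h

theorem dvd_of_C_pow_mul_eq_mul_of_isDistinguishedAt [IsDomain R] {p : R} (hp : p ≠ 0)
    {E : R[X]} (hE : E.IsDistinguishedAt (Ideal.span {p})) {N : ℕ} {y z : R⟦X⟧}
    (h : C p ^ N * y = E * z) : (E : R⟦X⟧) ∣ y := by
  induction N generalizing z with
  | zero => exact ⟨z, by simpa using h⟩
  | succ N ih =>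
    obtain ⟨z', rfl⟩ : C p ∣ z :=
      C_dvd_of_C_dvd_mul_of_isDistinguishedAt hE ⟨_, by rw [← h, pow_succ', mul_assoc]⟩
    refine ih (z := z') (mul_left_cancel₀ ((map_ne_zero_iff _ C_injective).mpr hp) ?_)
    rw [← mul_assoc, ← pow_succ', h]
    ring

end PowerSeries

namespace LinearMap

variable {R M P : Type*} [CommRing R] [AddCommGroup M] [Module R M] [AddCommGroup P] [Module R P]

theorem exists_comp_eq_smul_id [Module.Projective R P] (f : M →ₗ[R] P) {r : R}
    (hr : ∀ x, r • x ∈ range f) : ∃ g : P →ₗ[R] M, f ∘ₗ g = r • id := by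
  obtain ⟨g, hg⟩ := Module.projective_lifting_property f.rangeRestrict
    ((r • id).codRestrict (range f) hr) f.surjective_rangeRestrict
  refine ⟨g, ext fun x => ?_⟩
  simpa using congr(((range f).subtype ∘ₗ $hg) x)

theorem comp_eq_smul_id_of_injective {f : M →ₗ[R] P} (hf : Function.Injective f)
    {g : P →ₗ[R] M} {r : R} (h : f ∘ₗ g = r • id) : g ∘ₗ f = r • id :=
  ext fun x => hf <| by simpa using congr($h (f x))

end LinearMap

namespace Function.Exact

variable {A F G M : Type*} [CommRing A] [AddCommGroup F] [Module A F] [AddCommGroup G]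
  [Module A G] [AddCommGroup M] [Module A M]

theorem isSMulRegular_of_comp_eq_smul_id {f : F →ₗ[A] G} {g : G →ₗ[A] M} (hfg : Exact f g)
    (hg : Surjective g) {h : G →ₗ[A] F} {r e : A} (hhf : h ∘ₗ f = r • LinearMap.id)
    (hfh : f ∘ₗ h = r • LinearMap.id) (hrF : IsSMulRegular F r) (heG : IsSMulRegular G e)
    (hdvd : ∀ z w : F, r • z = e • w → ∃ z', z = e • z') : IsSMulRegular M e := by
  have hf : Injective f := fun z₁ z₂ hz => hrF <| by
    simpa only [← LinearMap.comp_apply h f, hhf, LinearMap.smul_apply, LinearMap.id_apply]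
      using congr(h $hz)
  refine isSMulRegular_iff_right_eq_zero_of_smul.mpr fun x hx => ?_
  obtain ⟨y, rfl⟩ := hg x
  obtain ⟨z, hz⟩ : ∃ z, f z = e • y := (hfg _).mp (by rw [map_smul, hx])
  obtain ⟨z', rfl⟩ : ∃ z', z = e • z' := hdvd z (h y) <| hf <| by
    rw [map_smul, map_smul, hz, ← LinearMap.comp_apply f h, hfh]
    exact smul_comm r e y
  have : y = f z' := heG <| by simp only [← hz, map_smul]
  rw [this]
  exact (hfg _).mpr ⟨z', rfl⟩

end Function.Exact

open TensorProduct

section BaseChange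

variable {R A : Type*} [CommRing R] [CommRing A] [Algebra R A]

theorem LinearMap.baseChange_smul_id {M : Type*} [AddCommGroup M] [Module R M] (r : R) :
    (r • LinearMap.id : M →ₗ[R] M).baseChange A = algebraMap R A r • LinearMap.id := by
  rw [LinearMap.baseChange_smul, LinearMap.baseChange_id]
  exact LinearMap.ext fun x => (algebraMap_smul A r x).symm

variable {ι : Type*} [Fintype ι] [DecidableEq ι]

theorem IsSMulRegular.tensorProduct_pi {c : A} (hc : IsSMulRegular A c) :
    IsSMulRegular (A ⊗[R] (ι → R)) c :=
  ((piScalarRight R A A ι).isSMulRegular_congr c).mpr (Pi.isSMulRegular_iff.mpr fun _ => hc)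

theorem TensorProduct.exists_eq_smul_of_smul_eq_smul_pi {c e : A}
    (hdvd : ∀ z w : A, c * z = e * w → e ∣ z) (z w : A ⊗[R] (ι → R)) (h : c • z = e • w) :
    ∃ z', z = e • z' := by
  let Φ := piScalarRight R A A ι
  have hi (i : ι) : e ∣ Φ z i := hdvd _ (Φ w i) <| by
    simpa only [map_smul, Pi.smul_apply, smul_eq_mul] using congr(Φ $h i)
  choose z' hz' using hi
  exact ⟨Φ.symm z', Φ.injective <| funext fun i => by simp [hz', smul_eq_mul]⟩

theorem isSMulRegular_baseChange_cokernel {κ : Type*} [Fintype κ] [DecidableEq κ]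
    {j : (ι → R) →ₗ[R] (κ → R)} (hj : Function.Injective j) {r : R}
    (hr : ∀ x, r • x ∈ LinearMap.range j) {e : A}
    (hrA : IsSMulRegular A (algebraMap R A r)) (heA : IsSMulRegular A e)
    (hdvd : ∀ z w : A, algebraMap R A r * z = e * w → e ∣ z) :
    IsSMulRegular (A ⊗[R] ((κ → R) ⧸ LinearMap.range j)) e := by
  obtain ⟨h, hjh⟩ := j.exists_comp_eq_smul_id hr
  have hhj := LinearMap.comp_eq_smul_id_of_injective hj hjh
  have hexact : Function.Exact (j.baseChange A) ((LinearMap.range j).mkQ.baseChange A) := by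
    simpa only [LinearMap.baseChange_eq_ltensor] using
      lTensor_exact A (LinearMap.exact_map_mkQ_range j) (Submodule.mkQ_surjective _)
  refine hexact.isSMulRegular_of_comp_eq_smul_id (h := h.baseChange A)
    (LinearMap.baseChange_surjective A (Submodule.mkQ_surjective _)) ?_ ?_
    hrA.tensorProduct_pi heA.tensorProduct_pi (exists_eq_smul_of_smul_eq_smul_pi hdvd)
  · rw [← LinearMap.baseChange_comp, hhj, LinearMap.baseChange_smul_id]
  · rw [← LinearMap.baseChange_comp, hjh, LinearMap.baseChange_smul_id]

end BaseChange

section Twist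

variable {R : Type*} [CommRing R] (ψ : R →+* R)

instance : Algebra R (TwBase ψ) where
  algebraMap := ψ
  commutes' _ _ := mul_comm _ _
  smul_def' _ _ := rfl

instance (M : Type*) [AddCommGroup M] [Module R M] : Module (TwBase ψ) (Twist ψ M) :=
  inferInstanceAs (Module (TwBase ψ) (TwBase ψ ⊗[R] M))

def TwBase.of : R →+* TwBase ψ := RingHom.id R

theorem twistSMul_eq_smul (a : R) (M : Type*) [AddCommGroup M] [Module R M] :
    ⇑(twistSMul ψ a M) = (TwBase.of ψ a • · : Twist ψ M → Twist ψ M) := by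
  ext x
  induction x using TensorProduct.induction_on with
  | zero => exact (smul_zero _).symm
  | tmul s m => rfl
  | add x y hx hy =>
    exact (map_add _ x y).trans ((congrArg₂ (· + ·) hx hy).trans (smul_add _ x y).symm)

end Twist

theorem stmt_13_general {p : ℕ} [Fact p.Prime] {k : Type*} [Field k] [CharP k p]
    (σ : PowerSeries (WittVector p k) →+* PowerSeries (WittVector p k))
    (E : Polynomial (WittVector p k)) (e : ℕ) (hE : E.Monic) (hdeg : E.natDegree = e)
    (hco : ∀ i < e, (p : WittVector p k) ∣ E.coeff i)
    (a b : ℕ)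
    (j : (Fin a → PowerSeries (WittVector p k)) →ₗ[PowerSeries (WittVector p k)]
      (Fin b → PowerSeries (WittVector p k)))
    (hj : Function.Injective j)
    (hM : ∃ N : ℕ, ∀ x : (Fin b → PowerSeries (WittVector p k)) ⧸ LinearMap.range j,
      (p : PowerSeries (WittVector p k)) ^ N • x = 0)
    (n : ℕ) :
    let 𝔖 := PowerSeries (WittVector p k)
    let ψ := iterateHom σ n
    LinearMap.ker (twistSMul ψ (E : 𝔖) ((Fin b → 𝔖) ⧸ LinearMap.range j)) = ⊥ := by
  intro 𝔖 ψ
  obtain ⟨N, hN⟩ := hM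
  have hp : (p : WittVector p k) ≠ 0 := WittVector.p_nonzero p k
  have hEp : E.IsDistinguishedAt (Ideal.span {(p : WittVector p k)}) :=
    ⟨⟨fun hi => Ideal.mem_span_singleton.mpr (hco _ (hdeg ▸ hi))⟩, hE⟩
  have hreg (c : 𝔖) (hc : c ≠ 0) : IsSMulRegular 𝔖 c :=
    (IsRegular.of_ne_zero hc).left.isSMulRegular
  have hpN : algebraMap 𝔖 (TwBase ψ) ((p : 𝔖) ^ N) =
      TwBase.of ψ (PowerSeries.C (p : WittVector p k) ^ N) := by
    show ψ ((p : 𝔖) ^ N) = PowerSeries.C (p : WittVector p k) ^ N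
    rw [map_pow, map_natCast, map_natCast]
  rw [LinearMap.ker_eq_bot, twistSMul_eq_smul]
  refine isSMulRegular_baseChange_cokernel hj (r := (p : 𝔖) ^ N) (fun x => ?_) ?_ ?_ ?_
  · rw [← Submodule.Quotient.mk_eq_zero, Submodule.Quotient.mk_smul]
    exact hN _
  · rw [hpN]
    exact hreg _ (pow_ne_zero N ((map_ne_zero_iff _ PowerSeries.C_injective).mpr hp))
  · exact hreg _ (Polynomial.coe_eq_zero_iff.not.mpr hE.ne_zero)
  · intro z w h
    rw [hpN] at h
    exact PowerSeries.dvd_of_C_pow_mul_eq_mul_of_isDistinguishedAt hp hEp h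

/-- Let `k` be a perfect field of characteristic `p`, `W = W(k)`,
`𝔖 = W[[u]]` with its Frobenius lift `σ`, and `E ∈ W[u]` an Eisenstein polynomial of
degree `e`. Let `N' ⊆ N` be finitely generated free `𝔖`-modules (presented here as an
injective `𝔖`-linear map `j : 𝔖^a → 𝔖^b`), such that `M = N/N'` is killed by a power of
`p`. Then for every `n ≥ 0`, the Frobenius twist `M^{(n)} = 𝔖 ⊗_{𝔖,σ^n} M` has trivial
`E`-torsion: `M^{(n)}[E] = 0`. -/
theorem stmt_13 {p : ℕ} [Fact p.Prime] {k : Type*} [Field k] [CharP k p] [PerfectField k]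
    (σ : PowerSeries (WittVector p k) →+* PowerSeries (WittVector p k))
    (hσ : ∀ (f : PowerSeries (WittVector p k)) (m : ℕ),
      PowerSeries.coeff m (σ f) =
        if p ∣ m then WittVector.frobenius (PowerSeries.coeff (m / p) f) else 0)
    (E : Polynomial (WittVector p k)) (e : ℕ) (hE : E.Monic) (hdeg : E.natDegree = e)
    (hco : ∀ i < e, (p : WittVector p k) ∣ E.coeff i)
    (hconst : ∃ v : (WittVector p k)ˣ, E.coeff 0 = (p : WittVector p k) * v)
    (a b : ℕ)
    (j : (Fin a → PowerSeries (WittVector p k)) →ₗ[PowerSeries (WittVector p k)]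
      (Fin b → PowerSeries (WittVector p k)))
    (hj : Function.Injective j)
    (hM : ∃ N : ℕ, ∀ x : (Fin b → PowerSeries (WittVector p k)) ⧸ LinearMap.range j,
      (p : PowerSeries (WittVector p k)) ^ N • x = 0)
    (n : ℕ) :
    let 𝔖 := PowerSeries (WittVector p k)
    let ψ := iterateHom σ n
    LinearMap.ker (twistSMul ψ (E : 𝔖) ((Fin b → 𝔖) ⧸ LinearMap.range j)) = ⊥ :=
  stmt_13_general σ E e hE hdeg hco a b j hj hM n
end
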